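/- arXiv:1406.1967 — 2 statements merged into one kernel-verified Lean document; each statement's English description precedes it below -/
import Mathlib

section
/- Let s, n be positive integers, V = 𝔽₂^{s×n}, and let P ⊆ V be an 𝔽₂-linear subspace. Then WAFOM(P) := Σ_{A ∈ P^⊥ \ {0}} 2^{−μ'(A)} satisfies the computational formula WAFOM(P) = (1/|P|) · Σ_{x = (x_{i,j}) ∈ P} [ Π_{1≤i≤s} Π_{1≤j≤n} (1 + (−1)^{x_{i,j}} · 2^{−(j+1)}) − 1 ]. -/
/-!
Write `χ(a) = (-1)^a` for `a ∈ 𝔽₂` and `⟨x, A⟩ = Σ_{i,j} x_{i,j} a_{i,j}`. Expanding the product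
termwise, `Π_{i,j} (1 + χ(x_{i,j}) w_{i,j}) = Σ_A χ(⟨x, A⟩) Π_{i,j} w_{i,j}^{a_{i,j}}`, where `A`
ranges over all of `V`. Averaging over `x ∈ P`, character orthogonality turns `Σ_{x ∈ P} χ(⟨x, A⟩)`
into `|P|` when `A ∈ P^⊥` and into `0` otherwise, and the term `A = 0` accounts for the `- 1`.
With `w_{i,j} = 2^{-(j+1)}` the product `Π w_{i,j}^{a_{i,j}}` is `2^{-μ'(A)}`.
-/

open Finset

lemma AddChar.map_sum_eq_prod {ι A M : Type*} [AddCommMonoid A] [CommMonoid M]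
    (ψ : AddChar A M) (s : Finset ι) (f : ι → A) :
    ψ (∑ i ∈ s, f i) = ∏ i ∈ s, ψ (f i) := by
  simpa [← ofAdd_sum] using map_prod ψ.toMonoidHom (fun i => Multiplicative.ofAdd (f i)) s

lemma AddChar.sum_comp_eq_ite_of_injective {G H R : Type*} [AddGroup G] [Fintype G]
    [AddGroup H] [CommRing R] [IsDomain R] (ψ : AddChar H R) (hψ : Function.Injective ψ)
    (f : G →+ H) [Decidable (∀ g, f g = 0)] :
    ∑ g, ψ (f g) = if ∀ g, f g = 0 then (Fintype.card G : R) else 0 := by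
  have htriv : ψ.compAddMonoidHom f = 0 ↔ ∀ g, f g = 0 := by
    simp only [AddChar.eq_zero_iff, AddChar.compAddMonoidHom_apply,
      hψ.eq_iff' (AddChar.map_zero_eq_one ψ)]
  simpa only [AddChar.compAddMonoidHom_apply, htriv] using (ψ.compAddMonoidHom f).sum_eq_ite

noncomputable def signChar : AddChar (ZMod 2) ℝ := AddChar.zmodChar 2 neg_one_sq

lemma signChar_apply (a : ZMod 2) : signChar a = (-1) ^ a.val := rfl

lemma signChar_injective : Function.Injective signChar := by
  intro a b
  obtain rfl | rfl := (by decide : ∀ a : ZMod 2, a = 0 ∨ a = 1) a <;>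
  obtain rfl | rfl := (by decide : ∀ a : ZMod 2, a = 0 ∨ a = 1) b <;>
  norm_num [signChar_apply, ZMod.val_one]

lemma signChar_mul_pow_val (x a : ZMod 2) (r : ℝ) :
    (signChar x * r) ^ a.val = signChar (x * a) * r ^ a.val := by
  rw [mul_pow, ← AddChar.map_nsmul_eq_pow, nsmul_eq_mul, ZMod.natCast_zmod_val, mul_comm a]

lemma one_add_eq_sum_pow_val {R : Type*} [CommSemiring R] (r : R) :
    1 + r = ∑ a : ZMod 2, r ^ a.val := by
  rw [show (univ : Finset (ZMod 2)) = {0, 1} from rfl, sum_pair zero_ne_one]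
  simp [ZMod.val_one]

section

variable {m n : Type*} [Fintype m] [Fintype n]

def Matrix.pairing {R : Type*} [NonUnitalNonAssocSemiring R] (A : Matrix m n R) :
    Matrix m n R →+ R where
  toFun B := ∑ i, ∑ j, B i j * A i j
  map_zero' := by simp
  map_add' B C := by simp only [Matrix.add_apply, add_mul, sum_add_distrib]

@[simp]
lemma Matrix.pairing_apply {R : Type*} [NonUnitalNonAssocSemiring R] (A B : Matrix m n R) :
    A.pairing B = ∑ i, ∑ j, B i j * A i j := rfl

lemma prod_prod_one_add_eq_sum_pow_val {R : Type*} [CommSemiring R]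
    [DecidableEq m] [DecidableEq n] (c : m → n → R) :
    ∏ i, ∏ j, (1 + c i j) = ∑ A : Matrix m n (ZMod 2), ∏ i, ∏ j, c i j ^ (A i j).val := by
  simp only [one_add_eq_sum_pow_val, prod_univ_sum]
  rfl

lemma prod_prod_one_add_eq_sum_signChar [DecidableEq m] [DecidableEq n]
    (x : Matrix m n (ZMod 2)) (w : m → n → ℝ) :
    ∏ i, ∏ j, (1 + signChar (x i j) * w i j) =
      ∑ A : Matrix m n (ZMod 2), signChar (A.pairing x) * ∏ i, ∏ j, w i j ^ (A i j).val := by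
  rw [prod_prod_one_add_eq_sum_pow_val]
  refine sum_congr rfl fun A _ => ?_
  simp only [signChar_mul_pow_val, prod_mul_distrib, Matrix.pairing_apply,
    AddChar.map_sum_eq_prod]

lemma sum_signChar_pairing_eq_ite (P : Submodule (ZMod 2) (Matrix m n (ZMod 2))) [Fintype P]
    (A : Matrix m n (ZMod 2)) [Decidable (∀ B ∈ P, A.pairing B = 0)] :
    ∑ x : P, signChar (A.pairing x) =
      if ∀ B ∈ P, A.pairing B = 0 then (Nat.card P : ℝ) else 0 := by
  classical
  simpa [Nat.card_eq_fintype_card] using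
    signChar.sum_comp_eq_ite_of_injective signChar_injective
      (A.pairing.comp P.subtype.toAddMonoidHom)

lemma zpow_neg_sum_sum_mul {K : Type*} [Field K] (r : K) (e k : m → n → ℕ) :
    r ^ (-(∑ i, ∑ j, e i j * k i j : ℕ) : ℤ) = ∏ i, ∏ j, (r ^ (-(e i j : ℤ))) ^ k i j := by
  simp only [zpow_neg, zpow_natCast, ← inv_pow, ← pow_mul, prod_pow_eq_pow_sum]

theorem sum_dual_prod_pow_val_eq [DecidableEq m] [DecidableEq n]
    (P : Submodule (ZMod 2) (Matrix m n (ZMod 2))) [Fintype P]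
    [DecidablePred fun A : Matrix m n (ZMod 2) => ∀ B ∈ P, A.pairing B = 0]
    (w : m → n → ℝ) :
    ∑ A ∈ univ.filter (fun A : Matrix m n (ZMod 2) => (∀ B ∈ P, A.pairing B = 0) ∧ A ≠ 0),
        ∏ i, ∏ j, w i j ^ (A i j).val =
      (1 / (Nat.card P : ℝ)) *
        ∑ x : P, (∏ i, ∏ j, (1 + signChar ((x : Matrix m n (ZMod 2)) i j) * w i j) - 1) := by
  set W : Matrix m n (ZMod 2) → ℝ := fun A => ∏ i, ∏ j, w i j ^ (A i j).val
  have hterm (x : P) :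
      ∏ i, ∏ j, (1 + signChar ((x : Matrix m n (ZMod 2)) i j) * w i j) - 1 =
        ∑ A ∈ univ.erase 0, signChar (A.pairing x) * W A := by
    rw [prod_prod_one_add_eq_sum_signChar, ← add_sum_erase _ _ (mem_univ 0)]
    simp [W]
  calc _ = ∑ A ∈ univ.erase 0, (if ∀ B ∈ P, A.pairing B = 0 then W A else 0) := by
        rw [sum_filter, ← filter_ne', sum_filter]
        simp only [and_comm, ite_and, W]
    _ = _ := by
        rw [sum_congr rfl fun x _ => hterm x, sum_comm, mul_sum]
        refine sum_congr rfl fun A _ => ?_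
        rw [← sum_mul, sum_signChar_pairing_eq_ite]
        split_ifs <;> simp

end

open scoped Classical in
/-- The paper's column index `j ∈ {1, …, n}` is `j.val + 1` here. -/
theorem wafom_formula_general (s n : ℕ)
    (P : Submodule (ZMod 2) (Matrix (Fin s) (Fin n) (ZMod 2))) :
    ∑ A ∈ Finset.univ.filter
        (fun A : Matrix (Fin s) (Fin n) (ZMod 2) =>
          (∀ B ∈ P, ∑ i : Fin s, ∑ j : Fin n, B i j * A i j = (0 : ZMod 2)) ∧ A ≠ 0),
        (2 : ℝ) ^ (-(∑ i : Fin s, ∑ j : Fin n, ((j : ℕ) + 1 + 1) * (A i j).val : ℕ) : ℤ) =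
      (1 / (Nat.card P : ℝ)) *
        ∑ x : P,
          ((∏ i : Fin s, ∏ j : Fin n,
            (1 + (-1 : ℝ) ^ ((x : Matrix (Fin s) (Fin n) (ZMod 2)) i j).val *
              (2 : ℝ) ^ (-(((j : ℕ) + 1) + 1 : ℤ)))) - 1) := by
  simp only [zpow_neg_sum_sum_mul (2 : ℝ) (fun (_ : Fin s) (j : Fin n) => (j : ℕ) + 1 + 1)]
  exact sum_dual_prod_pow_val_eq P _

open scoped Classical in
/-- WAFOM computational formula: for an `𝔽₂`-linear subspace `P ⊆ V = 𝔽₂^{s×n}`,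
`Σ_{A ∈ P^⊥ \ {0}} 2^{−μ'(A)} = (1/|P|) Σ_{x ∈ P} [Π_{i,j} (1 + (−1)^{x_{i,j}} 2^{−(j+1)}) − 1]`,
where `μ'(A) = Σ_{i,j} (j+1)·a_{i,j}` and the paper's index `j` runs through `1, …, n`
(so a column index `j : Fin n` corresponds to the paper's `j.val + 1`). -/
theorem wafom_formula (s n : ℕ) (hs : 0 < s) (hn : 0 < n)
    (P : Submodule (ZMod 2) (Matrix (Fin s) (Fin n) (ZMod 2))) :
    ∑ A ∈ Finset.univ.filter
        (fun A : Matrix (Fin s) (Fin n) (ZMod 2) =>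
          (∀ B ∈ P, ∑ i : Fin s, ∑ j : Fin n, B i j * A i j = (0 : ZMod 2)) ∧ A ≠ 0),
        (2 : ℝ) ^ (-(∑ i : Fin s, ∑ j : Fin n, ((j : ℕ) + 1 + 1) * (A i j).val : ℕ) : ℤ) =
      (1 / (Nat.card P : ℝ)) *
        ∑ x : P,
          ((∏ i : Fin s, ∏ j : Fin n,
            (1 + (-1 : ℝ) ^ ((x : Matrix (Fin s) (Fin n) (ZMod 2)) i j).val *
              (2 : ℝ) ^ (-(((j : ℕ) + 1) + 1 : ℤ)))) - 1) :=
  wafom_formula_general s n P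
end

section
/- Let s, m, n, t be integers with s ≥ 1, n ≥ m ≥ t ≥ 0, and let C_1, …, C_s ∈ 𝔽₂^{n×m}. Suppose that for all nonnegative integers d_1, …, d_s with d_1 + ⋯ + d_s ≤ m − t and d_i ≤ n for each i, the system of vectors in 𝔽₂^m consisting of the first d_i rows of C_i for each i = 1, …, s (d_1 + ⋯ + d_s vectors in total) is linearly independent over 𝔽₂. Then for any invertible lower triangular matrices L_1, …, L_s ∈ 𝔽₂^{n×n}, the matrices L_1·C_1, …, L_s·C_s satisfy the same property: for all nonnegative integers d_1, …, d_s with d_1 + ⋯ + d_s ≤ m − t and d_i ≤ n, the system consisting of the first d_i rows of L_i·C_i for each i is linearly independent over 𝔽₂. -/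
/-- Niederreiter's rank criterion for digital `(t,m,s)`-nets is preserved under linear
scrambling by invertible lower triangular matrices: if for all `d : Fin s → ℕ` with
`d i ≤ n` and `Σ d i ≤ m − t` the collection of the first `d i` rows of each `C i` is
linearly independent over `𝔽₂`, then the same holds for the matrices `L i * C i`. -/
theorem rank_criterion_scrambling (s m n t : ℕ) (hs : 1 ≤ s) (hmn : m ≤ n) (htm : t ≤ m)
    (C : Fin s → Matrix (Fin n) (Fin m) (ZMod 2))
    (hC : ∀ d : Fin s → ℕ, ∀ hdn : (∀ i, d i ≤ n), (∑ i, d i) ≤ m - t →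
      LinearIndependent (ZMod 2)
        (fun p : (Σ i : Fin s, Fin (d i)) => C p.1 (Fin.castLE (hdn p.1) p.2)))
    (L : Fin s → Matrix (Fin n) (Fin n) (ZMod 2))
    (hL : ∀ i, IsUnit (L i))
    (hlow : ∀ i, ∀ a b : Fin n, a < b → L i a b = 0) :
    ∀ d : Fin s → ℕ, ∀ hdn : (∀ i, d i ≤ n), (∑ i, d i) ≤ m - t →
      LinearIndependent (ZMod 2)
        (fun p : (Σ i : Fin s, Fin (d i)) => (L p.1 * C p.1) (Fin.castLE (hdn p.1) p.2)) := by
  intro d hdn hsum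
  rw [Fintype.linearIndependent_iff]
  intro g hg
  have hLI := Fintype.linearIndependent_iff.mp (hC d hdn hsum)
  -- diagonal entries of each L i are nonzero
  have hdiag : ∀ (i : Fin s) (a : Fin n), L i a a ≠ 0 := by
    intro i a
    have hdet : IsUnit (L i).det := (Matrix.isUnit_iff_isUnit_det _).mp (hL i)
    have htri : (L i).BlockTriangular OrderDual.toDual := fun a b h => hlow i a b h
    rw [Matrix.det_of_lowerTriangular _ htri] at hdet
    have := hdet.ne_zero
    exact Finset.prod_ne_zero_iff.mp this a (Finset.mem_univ a)
  -- the leading principal blocks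
  set B : ∀ i : Fin s, Matrix (Fin (d i)) (Fin (d i)) (ZMod 2) :=
    fun i => Matrix.of (fun r k => L i (Fin.castLE (hdn i) r) (Fin.castLE (hdn i) k)) with hBdef
  have hBunit : ∀ i, IsUnit (B i).det := by
    intro i
    have htri : (B i).BlockTriangular OrderDual.toDual := by
      intro a b hab
      have hab' : (a : ℕ) < (b : ℕ) := hab
      exact hlow i _ _ hab'
    rw [Matrix.det_of_lowerTriangular _ htri]
    rw [isUnit_iff_ne_zero, Finset.prod_ne_zero_iff]
    intro a _
    exact hdiag i _
  -- truncated row formula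
  have hrow : ∀ (i : Fin s) (r : Fin (d i)),
      (L i * C i) (Fin.castLE (hdn i) r) =
      ∑ k : Fin (d i), B i r k • C i (Fin.castLE (hdn i) k) := by
    intro i r
    funext j
    simp only [Matrix.mul_apply, Finset.sum_apply, Pi.smul_apply, smul_eq_mul, hBdef,
      Matrix.of_apply]
    have hmap : ∑ k : Fin (d i), L i (Fin.castLE (hdn i) r) (Fin.castLE (hdn i) k)
          * C i (Fin.castLE (hdn i) k) j
        = ∑ k ∈ Finset.univ.map ⟨Fin.castLE (hdn i), Fin.castLE_injective _⟩,
            L i (Fin.castLE (hdn i) r) k * C i k j := by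
      rw [Finset.sum_map]
      rfl
    rw [hmap]
    symm
    apply Finset.sum_subset (Finset.subset_univ _)
    intro k _ hk
    have hklt : ¬ (k : ℕ) < d i := by
      intro h
      exact hk (Finset.mem_map.mpr ⟨⟨(k : ℕ), h⟩, Finset.mem_univ _, rfl⟩)
    have hlt : Fin.castLE (hdn i) r < k := by
      rw [Fin.lt_def]
      exact lt_of_lt_of_le r.2 (not_lt.mp hklt)
    rw [hlow i _ _ hlt, zero_mul]
  -- the transformed coefficients vanish
  have hzero : ∀ q : (Σ i : Fin s, Fin (d i)),
      (∑ r : Fin (d q.1), g ⟨q.1, r⟩ * B q.1 r q.2) = 0 := by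
    apply hLI
    calc ∑ q : (Σ i : Fin s, Fin (d i)),
          (∑ r : Fin (d q.1), g ⟨q.1, r⟩ * B q.1 r q.2) • C q.1 (Fin.castLE (hdn q.1) q.2)
        = ∑ i : Fin s, ∑ jj : Fin (d i),
            (∑ r : Fin (d i), g ⟨i, r⟩ * B i r jj) • C i (Fin.castLE (hdn i) jj) := by
          rw [← Finset.univ_sigma_univ, Finset.sum_sigma]
      _ = ∑ i : Fin s, ∑ r : Fin (d i),
            g ⟨i, r⟩ • (L i * C i) (Fin.castLE (hdn i) r) := by
          refine Finset.sum_congr rfl fun i _ => ?_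
          simp_rw [Finset.sum_smul, mul_smul]
          rw [Finset.sum_comm]
          refine Finset.sum_congr rfl fun r _ => ?_
          rw [hrow i r, Finset.smul_sum]
      _ = ∑ p : (Σ i : Fin s, Fin (d i)),
            g p • (L p.1 * C p.1) (Fin.castLE (hdn p.1) p.2) := by
          rw [← Finset.univ_sigma_univ, Finset.sum_sigma]
      _ = 0 := hg
  -- conclude g = 0 componentwise using invertibility of B i
  intro p
  obtain ⟨i, j⟩ := p
  have hvm : Matrix.vecMul (fun r => g ⟨i, r⟩) (B i) = 0 := by
    funext k
    simpa [Matrix.vecMul, dotProduct] using hzero ⟨i, k⟩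
  have hg0 : (fun r : Fin (d i) => g ⟨i, r⟩) = 0 := by
    have h2 := congrArg (fun v => Matrix.vecMul v (B i)⁻¹) hvm
    simpa [Matrix.vecMul_vecMul, Matrix.mul_nonsing_inv _ (hBunit i)] using h2
  exact congrFun hg0 j
end
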